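/- arXiv:1905.06865 — 2 statements merged into one kernel-verified Lean document; each statement's English description precedes it below -/
import Mathlib

section
/- For a trace class operator L on a separable Hilbert space, |tr L| ≤ ‖L‖₁, and equality holds if and only if there exists a complex number z with |z| = 1 such that zL is a positive semidefinite operator. -/
noncomputable section

open Filter Topology

local notation "⟪" x ", " y "⟫" => @inner ℂ _ _ x y

/-- The trace norm of a bounded operator on a complex Hilbert space, defined as the
supremum over all pairs of finite orthonormal families of `∑ i, ‖⟪L (x i), y i⟫‖`.
For trace class operators this equals the sum of the singular values, and an operator
is trace class iff this is finite. -/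
def traceNorm {H : Type*} [NormedAddCommGroup H] [InnerProductSpace ℂ H]
    (L : H →L[ℂ] H) : ENNReal :=
  ⨆ (n : ℕ) (x : Fin n → H) (_ : Orthonormal ℂ x) (y : Fin n → H) (_ : Orthonormal ℂ y),
    ∑ i, (‖⟪L (x i), y i⟫‖₊ : ENNReal)

/-- index set of a chosen Hilbert basis of `H` -/
def hIndex (H : Type*) [NormedAddCommGroup H] [InnerProductSpace ℂ H] [CompleteSpace H] :
    Set H :=
  (exists_hilbertBasis ℂ H).choose

/-- a chosen Hilbert basis of `H` -/
def hBasis (H : Type*) [NormedAddCommGroup H] [InnerProductSpace ℂ H] [CompleteSpace H] :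
    HilbertBasis (hIndex H) ℂ H :=
  (exists_hilbertBasis ℂ H).choose_spec.choose

/-- the trace of an operator (meaningful for trace class operators, where it is
independent of the chosen Hilbert basis) -/
def opTrace {H : Type*} [NormedAddCommGroup H] [InnerProductSpace ℂ H] [CompleteSpace H]
    (L : H →L[ℂ] H) : ℂ :=
  ∑' i : hIndex H, ⟪(hBasis H i : H), L (hBasis H i)⟫

/-!
Summing `⟪eᵢ, L eᵢ⟫` over finitely many vectors of the Hilbert basis is one of the sums whose
supremum is `‖L‖₁`, so `|tr L| ≤ ‖L‖₁`.

If `A = zL ≥ 0`, write `A = S²` with `S = √A`. Then `|⟪A x, y⟫| ≤ (‖S x‖² + ‖S y‖²) / 2`, and by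
Parseval and Bessel `∑ₖ ‖S xₖ‖² ≤ ∑ᵢ ‖S eᵢ‖² = tr A` for every finite orthonormal family, so
`‖A‖₁ ≤ tr A`.

Conversely, if `|tr L| = ‖L‖₁`, rotate `L` so that `A = zL` has `tr A = ‖A‖₁`. Then every
`⟪eᵢ, A eᵢ⟫` is `≥ 0` and `∑ᵢ |⟪eᵢ, A eᵢ⟫| = ‖A‖₁`. Let `V` be the span of finitely many `eᵢ` and
`(fₖ)` an orthonormal basis of `V`. Since `(fₖ)` together with the remaining `eᵢ` is orthonormal,
`∑ₖ |⟪fₖ, A fₖ⟫|` is at most the sum of `⟪eᵢ, A eᵢ⟫` over the `eᵢ` spanning `V`, which equals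
`∑ₖ ⟪fₖ, A fₖ⟫` (both are the trace of the compression of `A` to `V`). Hence every
`⟪fₖ, A fₖ⟫ ≥ 0`. Every unit vector of `V` belongs to such a basis, and these spaces `V` are
dense in `H`.
-/

open scoped ComplexOrder

theorem Complex.exists_norm_eq_one_mul_eq_norm (w : ℂ) : ∃ z : ℂ, ‖z‖ = 1 ∧ z * w = ‖w‖ := by
  refine ⟨exp (↑(-w.arg) * I), norm_exp_ofReal_mul_I _, ?_⟩
  conv_lhs => rw [← norm_mul_exp_arg_mul_I w]
  rw [mul_left_comm, ← exp_add]
  simp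

theorem Complex.nonneg_of_tsum_norm_le_re_tsum {ι : Type*} {f : ι → ℂ} (hf : Summable f)
    (h : ∑' i, ‖f i‖ ≤ (∑' i, f i).re) (i : ι) : 0 ≤ f i := by
  have hgap := le_hasSum (hf.norm.hasSum.sub (hasSum_re hf.hasSum)) i fun j _ =>
    sub_nonneg.2 (re_le_norm (f j))
  rw [← re_eq_norm]
  linarith [re_le_norm (f i)]

theorem Orthonormal.sum_elim {𝕜 E ι κ : Type*} [RCLike 𝕜] [NormedAddCommGroup E]
    [InnerProductSpace 𝕜 E] {x : ι → E} {y : κ → E} (hx : Orthonormal 𝕜 x)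
    (hy : Orthonormal 𝕜 y) (hxy : ∀ i j, inner 𝕜 (x i) (y j) = 0) :
    Orthonormal 𝕜 (Sum.elim x y) := by
  classical
  rw [orthonormal_iff_ite] at hx hy ⊢
  rintro (i | i) (j | j)
  · simpa using hx i j
  · simp [hxy]
  · simp [inner_eq_zero_symm.1 (hxy j i)]
  · simpa using hy i j

section HilbertBasis

variable {𝕜 E ι : Type*} [RCLike 𝕜] [NormedAddCommGroup E] [InnerProductSpace 𝕜 E]

theorem HilbertBasis.hasSum_norm_inner_sq (b : HilbertBasis ι 𝕜 E) (x : E) :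
    HasSum (fun i => ‖inner 𝕜 (b i) x‖ ^ 2) (‖x‖ ^ 2) := by
  simpa [b.repr_apply_apply] using lp.hasSum_norm (p := 2) (by norm_num) (b.repr x)

theorem HilbertBasis.mem_of_isClosed (b : HilbertBasis ι 𝕜 E) {C : Set E} (hC : IsClosed C)
    (h : ∀ s : Finset ι, (Submodule.span 𝕜 (b '' s) : Set E) ⊆ C) (x : E) : x ∈ C :=
  hC.mem_of_tendsto (b.hasSum_repr x) <| Eventually.of_forall fun s =>
    h s <| Submodule.sum_mem _ fun i hi => Submodule.smul_mem _ _ <|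
      Submodule.subset_span ⟨i, hi, rfl⟩

end HilbertBasis

section TraceNorm

variable {H : Type*} [NormedAddCommGroup H] [InnerProductSpace ℂ H]

theorem isPositive_of_forall_inner_nonneg {A : H →L[ℂ] H} (h : ∀ x, 0 ≤ ⟪x, A x⟫) :
    A.IsPositive := by
  rw [ContinuousLinearMap.isPositive_iff_complex]
  intro x
  have hx : 0 ≤ ⟪A x, x⟫ := by rw [← inner_conj_symm]; exact star_nonneg_iff.2 (h x)
  obtain ⟨hre, him⟩ := Complex.nonneg_iff.1 hx
  exact ⟨Complex.ext (by simp) (by simp [him]), hre⟩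

theorem sum_enorm_inner_le_traceNorm (A : H →L[ℂ] H) {ι : Type*} [Fintype ι] {x y : ι → H}
    (hx : Orthonormal ℂ x) (hy : Orthonormal ℂ y) :
    ∑ i, (‖⟪A (x i), y i⟫‖₊ : ENNReal) ≤ traceNorm A := by
  let e := (Fintype.equivFin ι).symm
  rw [← e.sum_comp]
  exact le_iSup₂_of_le (Fintype.card ι) (x ∘ e) <|
    le_iSup₂_of_le (hx.comp e e.injective) (y ∘ e) <| le_iSup_of_le (hy.comp e e.injective) le_rfl

theorem sum_norm_inner_le_traceNorm {A : H →L[ℂ] H} (hA : traceNorm A ≠ ⊤) {ι : Type*}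
    [Fintype ι] {x y : ι → H} (hx : Orthonormal ℂ x) (hy : Orthonormal ℂ y) :
    ∑ i, ‖⟪A (x i), y i⟫‖ ≤ (traceNorm A).toReal := by
  simpa [ENNReal.toReal_sum] using ENNReal.toReal_mono hA (sum_enorm_inner_le_traceNorm A hx hy)

theorem traceNorm_toReal_le {A : H →L[ℂ] H} {C : ℝ} (hC : 0 ≤ C)
    (h : ∀ (n : ℕ) (x y : Fin n → H), Orthonormal ℂ x → Orthonormal ℂ y →
      ∑ i, ‖⟪A (x i), y i⟫‖ ≤ C) :
    (traceNorm A).toReal ≤ C := by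
  refine ENNReal.toReal_le_of_le_ofReal hC <|
    iSup_le fun n => iSup₂_le fun x hx => iSup₂_le fun y hy => ?_
  refine Eq.trans_le ?_ (ENNReal.ofReal_le_ofReal (h n x y hx hy))
  rw [ENNReal.ofReal_sum_of_nonneg fun _ _ => norm_nonneg _]
  simp only [ofReal_norm, enorm_eq_nnnorm]

theorem traceNorm_smul_of_norm_eq_one (A : H →L[ℂ] H) {z : ℂ} (hz : ‖z‖ = 1) :
    traceNorm (z • A) = traceNorm A := by
  have hz' : ‖z‖₊ = 1 := NNReal.eq hz
  simp [traceNorm, hz']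

theorem sum_norm_inner_self_le_traceNorm {A : H →L[ℂ] H} (hA : traceNorm A ≠ ⊤) {ι : Type*}
    [Fintype ι] {x : ι → H} (hx : Orthonormal ℂ x) :
    ∑ i, ‖⟪x i, A (x i)⟫‖ ≤ (traceNorm A).toReal := by
  simpa only [norm_inner_symm] using sum_norm_inner_le_traceNorm hA hx hx

section Orthonormal

variable {A : H →L[ℂ] H} (hA : traceNorm A ≠ ⊤) {ι : Type*} {v : ι → H}
  (hv : Orthonormal ℂ v)
include hA hv

theorem Orthonormal.sum_finset_norm_inner_self_le_traceNorm (s : Finset ι) :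
    ∑ i ∈ s, ‖⟪v i, A (v i)⟫‖ ≤ (traceNorm A).toReal := by
  rw [← s.sum_coe_sort]
  exact sum_norm_inner_self_le_traceNorm hA (hv.comp _ Subtype.val_injective)

theorem Orthonormal.summable_norm_inner_self : Summable fun i => ‖⟪v i, A (v i)⟫‖ :=
  summable_of_sum_le (fun _ => norm_nonneg _) (hv.sum_finset_norm_inner_self_le_traceNorm hA)

theorem Orthonormal.tsum_norm_inner_self_le_traceNorm :
    ∑' i, ‖⟪v i, A (v i)⟫‖ ≤ (traceNorm A).toReal :=
  tsum_le_of_sum_le' ENNReal.toReal_nonneg (hv.sum_finset_norm_inner_self_le_traceNorm hA)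

theorem Orthonormal.norm_tsum_inner_self_le_traceNorm :
    ‖∑' i, ⟪v i, A (v i)⟫‖ ≤ (traceNorm A).toReal :=
  (norm_tsum_le_tsum_norm (hv.summable_norm_inner_self hA)).trans
    (hv.tsum_norm_inner_self_le_traceNorm hA)

theorem Orthonormal.sum_norm_inner_self_add_tsum_compl_le (s : Finset ι) {κ : Type*}
    [Fintype κ] {x : κ → H} (hx : Orthonormal ℂ x) (hxv : ∀ k, ∀ i ∉ s, ⟪v i, x k⟫ = 0) :
    ∑ k, ‖⟪x k, A (x k)⟫‖ + ∑' i : {i // i ∉ s}, ‖⟪v i, A (v i)⟫‖ ≤ (traceNorm A).toReal := by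
  rw [← le_sub_iff_add_le']
  refine tsum_le_of_sum_le' (sub_nonneg.2 (sum_norm_inner_self_le_traceNorm hA hx)) fun t => ?_
  have hvt : Orthonormal ℂ fun i : t => v i :=
    hv.comp _ (Subtype.val_injective.comp Subtype.val_injective)
  have hxvt : ∀ k (i : t), ⟪x k, v i⟫ = 0 := fun k i => inner_eq_zero_symm.1 (hxv k _ i.1.2)
  have := sum_norm_inner_self_le_traceNorm hA (hx.sum_elim hvt hxvt)
  rw [Fintype.sum_sum_type] at this
  rw [le_sub_iff_add_le', ← t.sum_coe_sort]
  simpa using this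

end Orthonormal

section FiniteDimensional

variable {V : Submodule ℂ H} [FiniteDimensional ℂ V]

theorem OrthonormalBasis.sum_inner_apply_eq {ι κ : Type*} [Fintype ι] [Fintype κ]
    (e : OrthonormalBasis ι ℂ V) (c : OrthonormalBasis κ ℂ V) (A : H →L[ℂ] H) :
    ∑ i, ⟪(e i : H), A (e i)⟫ = ∑ j, ⟪(c j : H), A (c j)⟫ := by
  let T : V →ₗ[ℂ] V := V.orthogonalProjectionOnto.toLinearMap ∘ₗ A.toLinearMap ∘ₗ V.subtype
  have hT : ∀ u : V, ⟪u, T u⟫ = ⟪(u : H), A u⟫ := fun u => by simp [T]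
  simp_rw [← hT, ← LinearMap.trace_eq_sum_inner]

theorem inner_self_nonneg_of_forall_orthonormalBasis (A : H →L[ℂ] H)
    (h : ∀ (w : Finset V) (e : OrthonormalBasis w ℂ V),
      ∑ k, ‖⟪(e k : H), A (e k)⟫‖ ≤ (∑ k, ⟪(e k : H), A (e k)⟫).re)
    {x : H} (hx : x ∈ V) : 0 ≤ ⟪x, A x⟫ := by
  rcases eq_or_ne x 0 with rfl | hx0
  · simp
  set u : V := ((‖x‖⁻¹ : ℝ) : ℂ) • ⟨x, hx⟩
  have hu : ‖u‖ = 1 := by simp [u, norm_smul, hx0]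
  have hxu : x = (‖x‖ : ℂ) • (u : H) := by simp [u, smul_smul, hx0]
  obtain ⟨w, e, huw, he⟩ :=
    (orthonormal_subsingleton_iff.2 fun v => by rw [Set.mem_singleton_iff.1 v.2, hu] :
      Orthonormal ℂ ((↑) : ({u} : Set V) → V)).exists_orthonormalBasis_extension
  have hq := Complex.nonneg_of_tsum_norm_le_re_tsum (f := fun k => ⟪(e k : H), A (e k)⟫)
    .of_finite (by simpa only [tsum_fintype] using h w e) ⟨u, huw (Set.mem_singleton u)⟩
  rw [he] at hq
  rw [hxu, map_smul, inner_smul_left, inner_smul_right, ← mul_assoc]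
  exact mul_nonneg (star_mul_self_nonneg _) hq

end FiniteDimensional

section TraceNormEqTrace

variable {ι : Type*} (b : HilbertBasis ι ℂ H) {A : H →L[ℂ] H} (hA : traceNorm A ≠ ⊤)
include hA

theorem HilbertBasis.inner_self_nonneg_of_mem_span
    (htr : ∑' i, ‖⟪b i, A (b i)⟫‖ = (traceNorm A).toReal) (hdiag : ∀ i, 0 ≤ ⟪b i, A (b i)⟫)
    (s : Finset ι) {x : H} (hx : x ∈ Submodule.span ℂ (b '' s)) : 0 ≤ ⟪x, A x⟫ := by
  classical
  rw [← Finset.coe_image] at hx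
  let c := OrthonormalBasis.span b.orthonormal s
  refine inner_self_nonneg_of_forall_orthonormalBasis A (fun w e => ?_) hx
  have horth : ∀ k, ∀ i ∉ s, ⟪b i, e k⟫ = 0 := fun k i hi =>
    Submodule.mem_orthogonal_singleton_iff_inner_right.1 <| (Submodule.span_le.2 (by
      rintro _ hj
      obtain ⟨j, hjs, rfl⟩ := Finset.mem_image.1 hj
      exact Submodule.mem_orthogonal_singleton_iff_inner_right.2
        (b.orthonormal.2 fun hij => hi (hij ▸ hjs)))) (e k).2
  have hbound := b.orthonormal.sum_norm_inner_self_add_tsum_compl_le hA s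
    (e.orthonormal.comp_linearIsometry (Submodule.subtypeₗᵢ _)) horth
  rw [← htr, ← (b.orthonormal.summable_norm_inner_self hA).sum_add_tsum_subtype_compl s,
    add_le_add_iff_right] at hbound
  calc ∑ k, ‖⟪(e k : H), A (e k)⟫‖
      ≤ ∑ i ∈ s, ‖⟪b i, A (b i)⟫‖ := hbound
    _ = (∑ i ∈ s, ⟪b i, A (b i)⟫).re := by
        rw [Complex.re_sum]
        exact Finset.sum_congr rfl fun i _ => (Complex.re_eq_norm.2 (hdiag i)).symm
    _ = (∑ k, ⟪(e k : H), A (e k)⟫).re := by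
        rw [e.sum_inner_apply_eq c, ← s.sum_coe_sort]
        simp [c, OrthonormalBasis.span_apply]

theorem HilbertBasis.isPositive_of_traceNorm_toReal_le_re_tsum
    (h : (traceNorm A).toReal ≤ (∑' i, ⟪b i, A (b i)⟫).re) : A.IsPositive := by
  have hsum := b.orthonormal.summable_norm_inner_self hA
  have hle := b.orthonormal.tsum_norm_inner_self_le_traceNorm hA
  have hge : (∑' i, ⟪b i, A (b i)⟫).re ≤ ∑' i, ‖⟪b i, A (b i)⟫‖ :=
    (Complex.re_le_norm _).trans (norm_tsum_le_tsum_norm hsum)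
  have hdiag := Complex.nonneg_of_tsum_norm_le_re_tsum hsum.of_norm (hle.trans h)
  refine isPositive_of_forall_inner_nonneg fun x =>
    b.mem_of_isClosed (C := {x | 0 ≤ ⟪x, A x⟫}) ?_ (fun s y hy => ?_) x
  · exact isClosed_le continuous_const (by fun_prop)
  · exact b.inner_self_nonneg_of_mem_span hA (le_antisymm hle (h.trans hge)) hdiag s hy

end TraceNormEqTrace

section Complete

variable [CompleteSpace H] {ι : Type*}

theorem HilbertBasis.sum_norm_sq_apply_le_tsum (b : HilbertBasis ι ℂ H) {S : H →L[ℂ] H}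
    (hS : IsSelfAdjoint S) (hSb : Summable fun i => ‖S (b i)‖ ^ 2) {κ : Type*} [Fintype κ]
    {w : κ → H} (hw : Orthonormal ℂ w) :
    ∑ k, ‖S (w k)‖ ^ 2 ≤ ∑' i, ‖S (b i)‖ ^ 2 := by
  have hparseval : ∀ k, HasSum (fun i => ‖⟪w k, S (b i)⟫‖ ^ 2) (‖S (w k)‖ ^ 2) := fun k => by
    convert b.hasSum_norm_inner_sq (S (w k)) using 3 with i
    rw [← ContinuousLinearMap.coe_coe S, ← hS.isSymmetric, norm_inner_symm]
  calc ∑ k, ‖S (w k)‖ ^ 2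
      = ∑ k, ∑' i, ‖⟪w k, S (b i)⟫‖ ^ 2 := by simp_rw [(hparseval _).tsum_eq]
    _ = ∑' i, ∑ k, ‖⟪w k, S (b i)⟫‖ ^ 2 :=
        (Summable.tsum_finsetSum fun k _ => (hparseval k).summable).symm
    _ ≤ ∑' i, ‖S (b i)‖ ^ 2 :=
        Summable.tsum_le_tsum (fun i => hw.sum_inner_products_le _)
          (summable_sum fun k _ => (hparseval k).summable) hSb

theorem HilbertBasis.traceNorm_toReal_le_re_tsum_of_isPositive (b : HilbertBasis ι ℂ H)
    {A : H →L[ℂ] H} (hA : traceNorm A ≠ ⊤) (hpos : A.IsPositive) :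
    (traceNorm A).toReal ≤ (∑' i, ⟪b i, A (b i)⟫).re := by
  obtain ⟨S, hS, rfl⟩ : ∃ S : H →L[ℂ] H, IsSelfAdjoint S ∧ S * S = A := by
    rw [← ContinuousLinearMap.nonneg_iff_isPositive] at hpos
    exact ⟨CFC.sqrt A, (CFC.sqrt_nonneg A).isSelfAdjoint, CFC.sqrt_mul_sqrt_self A hpos⟩
  have hSS : ∀ x y, ⟪(S * S) x, y⟫ = ⟪S x, S y⟫ := fun x y => hS.isSymmetric (S x) y
  have hdiag : ∀ i, ⟪b i, (S * S) (b i)⟫ = ((‖S (b i)‖ ^ 2 : ℝ) : ℂ) := fun i => by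
    rw [← inner_conj_symm, hSS, inner_self_eq_norm_sq_to_K]
    simp
  have hsum : Summable fun i => ‖S (b i)‖ ^ 2 := by
    simpa only [hdiag, Complex.norm_real, Real.norm_of_nonneg (sq_nonneg _)] using
      b.orthonormal.summable_norm_inner_self hA
  rw [tsum_congr hdiag, ← Complex.ofReal_tsum, Complex.ofReal_re]
  refine traceNorm_toReal_le (tsum_nonneg fun _ => by positivity) fun n x y hx hy => ?_
  calc ∑ k, ‖⟪(S * S) (x k), y k⟫‖
      ≤ ∑ k, (‖S (x k)‖ ^ 2 + ‖S (y k)‖ ^ 2) / 2 := Finset.sum_le_sum fun k _ => by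
        rw [hSS]
        nlinarith [norm_inner_le_norm (𝕜 := ℂ) (S (x k)) (S (y k)),
          sq_nonneg (‖S (x k)‖ - ‖S (y k)‖)]
    _ = (∑ k, ‖S (x k)‖ ^ 2 + ∑ k, ‖S (y k)‖ ^ 2) / 2 := by
        rw [← Finset.sum_div, Finset.sum_add_distrib]
    _ ≤ ∑' i, ‖S (b i)‖ ^ 2 := by
        linarith [b.sum_norm_sq_apply_le_tsum hS hsum hx, b.sum_norm_sq_apply_le_tsum hS hsum hy]

theorem opTrace_smul (z : ℂ) (A : H →L[ℂ] H) :
    opTrace (z • A) = z * opTrace A := by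
  simp only [opTrace, smul_apply, inner_smul_right, tsum_mul_left]

end Complete

end TraceNorm

theorem abs_opTrace_le_traceNorm_general
    {H : Type*} [NormedAddCommGroup H] [InnerProductSpace ℂ H] [CompleteSpace H]
    (L : H →L[ℂ] H) (hL : traceNorm L ≠ ⊤) :
    ‖opTrace L‖ ≤ (traceNorm L).toReal ∧
    (‖opTrace L‖ = (traceNorm L).toReal ↔ ∃ z : ℂ, ‖z‖ = 1 ∧ (z • L).IsPositive) := by
  have hle : ‖opTrace L‖ ≤ (traceNorm L).toReal :=
    (hBasis H).orthonormal.norm_tsum_inner_self_le_traceNorm hL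
  refine ⟨hle, fun heq => ?_, fun ⟨z, hz, hpos⟩ => ?_⟩
  · obtain ⟨z, hz, hzL⟩ := Complex.exists_norm_eq_one_mul_eq_norm (opTrace L)
    have hzL' : traceNorm (z • L) = traceNorm L := traceNorm_smul_of_norm_eq_one L hz
    refine ⟨z, hz, (hBasis H).isPositive_of_traceNorm_toReal_le_re_tsum (hzL' ▸ hL) ?_⟩
    change _ ≤ (opTrace (z • L)).re
    rw [hzL', opTrace_smul, hzL, heq, Complex.ofReal_re]
  · have hzL : traceNorm (z • L) = traceNorm L := traceNorm_smul_of_norm_eq_one L hz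
    have hge := (hBasis H).traceNorm_toReal_le_re_tsum_of_isPositive (hzL ▸ hL) hpos
    change _ ≤ (opTrace (z • L)).re at hge
    rw [hzL, opTrace_smul] at hge
    refine le_antisymm hle (hge.trans ((Complex.re_le_norm _).trans ?_))
    rw [norm_mul, hz, one_mul]

/-- for a trace class `L`, `|tr L| ≤ ‖L‖₁`, with equality iff `zL` is
positive semidefinite for some unimodular `z`. -/
theorem abs_opTrace_le_traceNorm
    {H : Type*} [NormedAddCommGroup H] [InnerProductSpace ℂ H] [CompleteSpace H]
    [TopologicalSpace.SeparableSpace H]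
    (L : H →L[ℂ] H) (hL : traceNorm L ≠ ⊤) :
    ‖opTrace L‖ ≤ (traceNorm L).toReal ∧
    (‖opTrace L‖ = (traceNorm L).toReal ↔ ∃ z : ℂ, ‖z‖ = 1 ∧ (z • L).IsPositive) :=
  abs_opTrace_le_traceNorm_general L hL
end
end

section
/- Let a, b ∈ H₁ ⊗ H₂. Then the rank-one operator a b* satisfies max(‖tr₂(a b*)‖₁, ‖tr₁(a b*)‖₁) ≤ ‖a‖·‖b‖ = ‖a b*‖₁, and tr(a b*) = tr(tr₂(a b*)) = tr(tr₁(a b*)) = ⟨a, b⟩. -/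
noncomputable section

open Filter Topology

local notation "⟪" x ", " y "⟫" => @inner ℂ _ _ x y

/-- `tp` realizes `H` as the Hilbert tensor product of `H₁` and `H₂`:
it is bilinear, satisfies `⟪x ⊗ y, u ⊗ v⟫ = ⟪x, u⟫⟪y, v⟫`, and the span of the
elementary tensors is dense in `H`. -/
structure IsHilbertTensor {H₁ H₂ H : Type*}
    [NormedAddCommGroup H₁] [InnerProductSpace ℂ H₁]
    [NormedAddCommGroup H₂] [InnerProductSpace ℂ H₂]
    [NormedAddCommGroup H] [InnerProductSpace ℂ H]
    (tp : H₁ → H₂ → H) : Prop where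
  inner_tp : ∀ (x u : H₁) (y v : H₂), ⟪tp x y, tp u v⟫ = ⟪x, u⟫ * ⟪y, v⟫
  add_left : ∀ (x x' : H₁) (y : H₂), tp (x + x') y = tp x y + tp x' y
  smul_left : ∀ (c : ℂ) (x : H₁) (y : H₂), tp (c • x) y = c • tp x y
  add_right : ∀ (x : H₁) (y y' : H₂), tp x (y + y') = tp x y + tp x y'
  smul_right : ∀ (c : ℂ) (x : H₁) (y : H₂), tp x (c • y) = c • tp x y
  dense_span : Dense (Submodule.span ℂ {v : H | ∃ x y, v = tp x y} : Set H)

/-- `C` is the partial trace over `H₂` (denoted `tr₂ F`) of the operator `F` on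
`H = H₁ ⊗ H₂`: its matrix elements are `⟨(tr₂ F) x, y⟩ = ∑_j ⟨F (x ⊗ e_j), y ⊗ e_j⟩`
for a Hilbert basis `(e_j)` of `H₂`; this characterizes the map determined by
`tr₂((x⊗y)(u⊗v)*) = ⟨y,v⟩ x u*`. -/
def IsPartialTrace₂ {H₁ H₂ H : Type*}
    [NormedAddCommGroup H₁] [InnerProductSpace ℂ H₁] [CompleteSpace H₁]
    [NormedAddCommGroup H₂] [InnerProductSpace ℂ H₂] [CompleteSpace H₂]
    [NormedAddCommGroup H] [InnerProductSpace ℂ H]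
    (tp : H₁ → H₂ → H) (F : H →L[ℂ] H) (C : H₁ →L[ℂ] H₁) : Prop :=
  ∀ x y : H₁, ⟪y, C x⟫ = ∑' j : hIndex H₂, ⟪tp y (hBasis H₂ j), F (tp x (hBasis H₂ j))⟫

/-- `D` is the partial trace over `H₁` (denoted `tr₁ F`) of the operator `F` on
`H = H₁ ⊗ H₂`. -/
def IsPartialTrace₁ {H₁ H₂ H : Type*}
    [NormedAddCommGroup H₁] [InnerProductSpace ℂ H₁] [CompleteSpace H₁]
    [NormedAddCommGroup H₂] [InnerProductSpace ℂ H₂] [CompleteSpace H₂]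
    [NormedAddCommGroup H] [InnerProductSpace ℂ H]
    (tp : H₁ → H₂ → H) (F : H →L[ℂ] H) (D : H₂ →L[ℂ] H₂) : Prop :=
  ∀ u v : H₂, ⟪v, D u⟫ = ∑' i : hIndex H₁, ⟪tp (hBasis H₁ i) v, F (tp (hBasis H₁ i) u)⟫

/-- the rank one operator `a b*`, sending `x` to `⟪b, x⟫ • a` (that is, `⟨x, b⟩ a` in the
convention where the inner product is linear in the first argument) -/
def rankOne {H : Type*} [NormedAddCommGroup H] [InnerProductSpace ℂ H] (a b : H) :
    H →L[ℂ] H :=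
  (innerSL ℂ b).smulRight a

/-!
Contracting `c ∈ H₁ ⊗ H₂` against `x ∈ H₁` gives `K_c x ∈ H₂` with `⟪K_c x, v⟫ = ⟪c, x ⊗ v⟫`;
expanding in a Hilbert basis of `H₂` shows that `tr₂(a b*)` is the operator with
`⟪y, tr₂(a b*) x⟫ = ⟪K_b x, K_a y⟫`. For orthonormal `(x_i)` the map `w ↦ ∑ x_i ⊗ w_i` is an
isometry whose adjoint is `c ↦ (K_c x_i)_i`, so `∑ ‖K_c x_i‖² ≤ ‖c‖²`, and Cauchy–Schwarz bounds
every trace-norm pairing of `tr₂(a b*)` by `‖a‖ ‖b‖`; for `a b*` itself this is Bessel's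
inequality, attained at `x = b / ‖b‖`, `y = a / ‖a‖`. The product vectors `e_i ⊗ f_j` of two
Hilbert bases form a Hilbert basis of `H`, and summing the defining series of `tr₂(a b*)` over it
gives `tr(tr₂(a b*)) = tr(a b*) = ⟪b, a⟫`. Finally `tr₁` is `tr₂` for the flipped tensor product.
-/

theorem rankOne_apply {E : Type*} [NormedAddCommGroup E] [InnerProductSpace ℂ E] (a b x : E) :
    rankOne a b x = ⟪b, x⟫ • a := rfl

section TraceNorm

variable {E : Type*} [NormedAddCommGroup E] [InnerProductSpace ℂ E]

theorem ofReal_norm_inner_le_traceNorm (L : E →L[ℂ] E) {u v : E} (hu : ‖u‖ = 1) (hv : ‖v‖ = 1) :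
    ENNReal.ofReal ‖⟪L u, v⟫‖ ≤ traceNorm L := by
  have orthonormal_const {w : E} (hw : ‖w‖ = 1) : Orthonormal ℂ (fun _ : Fin 1 => w) :=
    ⟨fun _ => hw, fun i j hij => (hij (Subsingleton.elim i j)).elim⟩
  refine le_iSup_of_le 1 <| le_iSup_of_le _ <| le_iSup_of_le (orthonormal_const hu) <|
    le_iSup_of_le _ <| le_iSup_of_le (orthonormal_const hv) ?_
  simp [ofReal_norm, enorm_eq_nnnorm]

theorem traceNorm_le_of_norm_inner_le {L : E →L[ℂ] E} {f g : E → ℝ} {A B : ℝ}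
    (hA : 0 ≤ A) (hB : 0 ≤ B) (hL : ∀ x y, ‖⟪L x, y⟫‖ ≤ f x * g y)
    (hf : ∀ n (x : Fin n → E), Orthonormal ℂ x → ∑ i, f (x i) ^ 2 ≤ A ^ 2)
    (hg : ∀ n (y : Fin n → E), Orthonormal ℂ y → ∑ i, g (y i) ^ 2 ≤ B ^ 2) :
    traceNorm L ≤ ENNReal.ofReal (A * B) := by
  refine iSup_le fun n => iSup_le fun x => iSup_le fun hx => iSup_le fun y => iSup_le fun hy => ?_
  have hsqrt {F : Fin n → ℝ} {C : ℝ} (hC : 0 ≤ C) (h : ∑ i, F i ^ 2 ≤ C ^ 2) :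
      √(∑ i, F i ^ 2) ≤ C :=
    (Real.sqrt_le_sqrt h).trans_eq (Real.sqrt_sq hC)
  calc ∑ i, (‖⟪L (x i), y i⟫‖₊ : ENNReal)
      = ENNReal.ofReal (∑ i, ‖⟪L (x i), y i⟫‖) := by
        simp [ENNReal.ofReal_sum_of_nonneg, ofReal_norm, enorm_eq_nnnorm]
    _ ≤ ENNReal.ofReal (A * B) := by
      refine ENNReal.ofReal_le_ofReal ?_
      calc ∑ i, ‖⟪L (x i), y i⟫‖ ≤ ∑ i, f (x i) * g (y i) := by gcongr; exact hL _ _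
        _ ≤ √(∑ i, f (x i) ^ 2) * √(∑ i, g (y i) ^ 2) := Real.sum_mul_le_sqrt_mul_sqrt _ _ _
        _ ≤ A * B :=
          mul_le_mul (hsqrt hA (hf n x hx)) (hsqrt hB (hg n y hy)) (Real.sqrt_nonneg _) hA

theorem norm_inner_rankOne_apply (a b x y : E) :
    ‖⟪rankOne a b x, y⟫‖ = ‖⟪x, b⟫‖ * ‖⟪y, a⟫‖ := by
  rw [rankOne_apply, inner_smul_left, norm_mul, RCLike.norm_conj, norm_inner_symm b,
    norm_inner_symm a]

theorem traceNorm_rankOne (a b : E) : traceNorm (rankOne a b) = ENNReal.ofReal (‖a‖ * ‖b‖) := by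
  refine le_antisymm ?_ ?_
  · rw [mul_comm]
    exact traceNorm_le_of_norm_inner_le (f := fun x => ‖⟪x, b⟫‖) (g := fun y => ‖⟪y, a⟫‖)
      (norm_nonneg b) (norm_nonneg a)
      (fun x y => (norm_inner_rankOne_apply a b x y).le) (fun _ _ hx => hx.sum_inner_products_le b)
      (fun _ _ hy => hy.sum_inner_products_le a)
  · rcases eq_or_ne a 0 with rfl | ha
    · simp
    rcases eq_or_ne b 0 with rfl | hb
    · simp
    have hnorm {z : E} (hz : z ≠ 0) : ‖⟪(‖z‖⁻¹ : ℂ) • z, z⟫‖ = ‖z‖ := by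
      rw [inner_smul_left, norm_mul, RCLike.norm_conj, norm_inv, inner_self_eq_norm_sq_to_K]
      simp only [Complex.norm_real, norm_norm, Complex.coe_algebraMap, norm_pow]
      field_simp
    calc ENNReal.ofReal (‖a‖ * ‖b‖)
        = ENNReal.ofReal ‖⟪rankOne a b ((‖b‖⁻¹ : ℂ) • b), (‖a‖⁻¹ : ℂ) • a⟫‖ := by
          rw [norm_inner_rankOne_apply, hnorm ha, hnorm hb, mul_comm]
      _ ≤ traceNorm (rankOne a b) :=
          ofReal_norm_inner_le_traceNorm _ (norm_smul_inv_norm hb) (norm_smul_inv_norm ha)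

end TraceNorm

section Trace

variable {E : Type*} [NormedAddCommGroup E] [InnerProductSpace ℂ E]

theorem eq_zero_of_inner_eq_zero_of_dense_span {s : Set E}
    (hs : Dense (Submodule.span ℂ s : Set E)) {z : E} (hz : ∀ v ∈ s, ⟪v, z⟫ = 0) : z = 0 := by
  have hspan : Submodule.span ℂ s ≤ (ℂ ∙ z)ᗮ := Submodule.span_le.2 fun v hv =>
    Submodule.mem_orthogonal_singleton_iff_inner_left.2 (hz v hv)
  exact hs.eq_zero_of_inner_right ℂ fun v hv =>
    Submodule.mem_orthogonal_singleton_iff_inner_left.1 (hspan hv)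

theorem HilbertBasis.eq_zero_of_inner_eq_zero {ι : Type*} (e : HilbertBasis ι ℂ E) {z : E}
    (hz : ∀ i, ⟪e i, z⟫ = 0) : z = 0 :=
  eq_zero_of_inner_eq_zero_of_dense_span
    (Submodule.dense_iff_topologicalClosure_eq_top.2 e.dense_span) (by simpa using hz)

theorem HilbertBasis.hasSum_inner_rankOne {ι : Type*} (e : HilbertBasis ι ℂ E) (a b : E) :
    HasSum (fun i => ⟪e i, rankOne a b (e i)⟫) ⟪b, a⟫ := by
  simpa only [rankOne_apply, inner_smul_right] using e.hasSum_inner_mul_inner b a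

theorem opTrace_rankOne [CompleteSpace E] (a b : E) : opTrace (rankOne a b) = ⟪b, a⟫ :=
  ((hBasis E).hasSum_inner_rankOne a b).tsum_eq

theorem IsPartialTrace₂.opTrace_eq {H₁ H₂ : Type*}
    [NormedAddCommGroup H₁] [InnerProductSpace ℂ H₁] [CompleteSpace H₁]
    [NormedAddCommGroup H₂] [InnerProductSpace ℂ H₂] [CompleteSpace H₂]
    {tp : H₁ → H₂ → E} {F : E →L[ℂ] E} {C : H₁ →L[ℂ] H₁} (hC : IsPartialTrace₂ tp F C)
    (hF : Summable fun p : hIndex H₁ × hIndex H₂ =>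
      ⟪tp (hBasis H₁ p.1) (hBasis H₂ p.2), F (tp (hBasis H₁ p.1) (hBasis H₂ p.2))⟫) :
    opTrace C = ∑' p : hIndex H₁ × hIndex H₂,
      ⟪tp (hBasis H₁ p.1) (hBasis H₂ p.2), F (tp (hBasis H₁ p.1) (hBasis H₂ p.2))⟫ := by
  rw [opTrace, hF.tsum_prod]
  exact tsum_congr fun i => hC _ _

end Trace

namespace IsHilbertTensor

variable {H₁ H₂ H : Type*}
  [NormedAddCommGroup H₁] [InnerProductSpace ℂ H₁]
  [NormedAddCommGroup H₂] [InnerProductSpace ℂ H₂]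
  [NormedAddCommGroup H] [InnerProductSpace ℂ H]
  {tp : H₁ → H₂ → H} (htp : IsHilbertTensor tp)
include htp

theorem flip : IsHilbertTensor (fun (y : H₂) (x : H₁) => tp x y) where
  inner_tp y v x u := by rw [htp.inner_tp, mul_comm]
  add_left y y' x := htp.add_right x y y'
  smul_left c y x := htp.smul_right c x y
  add_right y x x' := htp.add_left x x' y
  smul_right c y x := htp.smul_left c x y
  dense_span := by
    convert htp.dense_span using 5
    exact exists_comm

theorem norm_tp (x : H₁) (y : H₂) : ‖tp x y‖ = ‖x‖ * ‖y‖ := by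
  have h := htp.inner_tp x x y y
  simp only [inner_self_eq_norm_sq_to_K] at h
  refine (pow_left_inj₀ (norm_nonneg _) (by positivity) two_ne_zero).1 ?_
  rw [mul_pow]
  exact_mod_cast h

theorem orthonormal_tp {ι κ : Type*} {v : ι → H₁} {w : κ → H₂}
    (hv : Orthonormal ℂ v) (hw : Orthonormal ℂ w) :
    Orthonormal ℂ (fun p : ι × κ => tp (v p.1) (w p.2)) := by
  classical
  rw [orthonormal_iff_ite] at hv hw ⊢
  rintro ⟨i, j⟩ ⟨i', j'⟩
  simp only [htp.inner_tp, hv, hw, Prod.mk.injEq, ite_zero_mul_ite_zero, ite_and, mul_one]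

theorem norm_sum_tp_sq {ι : Type*} [Fintype ι] {x : ι → H₁} (hx : Orthonormal ℂ x)
    (w : ι → H₂) : ‖∑ i, tp (x i) (w i)‖ ^ 2 = ∑ i, ‖w i‖ ^ 2 := by
  classical
  rw [orthonormal_iff_ite] at hx
  have h : ⟪∑ i, tp (x i) (w i), ∑ i, tp (x i) (w i)⟫ = ∑ i, ⟪w i, w i⟫ := by
    simp only [sum_inner, inner_sum, htp.inner_tp, hx, ite_mul, zero_mul, one_mul,
      Finset.sum_ite_eq', Finset.mem_univ, if_true]
  simp only [inner_self_eq_norm_sq_to_K] at h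
  exact_mod_cast h

def toCLM : H₁ →L[ℂ] H₂ →L[ℂ] H :=
  (LinearMap.mk₂ ℂ tp htp.add_left htp.smul_left htp.add_right htp.smul_right).mkContinuous₂ 1
    fun x y => by simp [htp.norm_tp]

variable [CompleteSpace H₂] [CompleteSpace H]

def contract (c : H) : H₁ →L⋆[ℂ] H₂ :=
  ContinuousLinearMap.apply ℂ H₂ c ∘SL
    ContinuousLinearMap.adjoint.toContinuousLinearEquiv.toContinuousLinearMap ∘SL htp.toCLM

theorem inner_contract_left (c : H) (x : H₁) (v : H₂) :
    ⟪htp.contract c x, v⟫ = ⟪c, tp x v⟫ :=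
  (htp.toCLM x).adjoint_inner_left v c

theorem inner_contract_right (c : H) (x : H₁) (v : H₂) :
    ⟪v, htp.contract c x⟫ = ⟪tp x v, c⟫ := by
  rw [← inner_conj_symm, inner_contract_left, inner_conj_symm]

theorem sum_norm_contract_sq_le (c : H) {ι : Type*} [Fintype ι] {x : ι → H₁}
    (hx : Orthonormal ℂ x) : ∑ i, ‖htp.contract c (x i)‖ ^ 2 ≤ ‖c‖ ^ 2 := by
  set w := fun i => htp.contract c (x i)
  set S := ∑ i, ‖w i‖ ^ 2
  have hS : S = RCLike.re ⟪c, ∑ i, tp (x i) (w i)⟫ := by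
    simp only [S, w, inner_sum, map_sum, ← htp.inner_contract_left, inner_self_eq_norm_sq]
  have hS_le : S ≤ ‖c‖ * ‖∑ i, tp (x i) (w i)‖ :=
    hS.le.trans ((RCLike.re_le_norm _).trans (norm_inner_le_norm _ _))
  have hnorm := htp.norm_sum_tp_sq hx w
  nlinarith [norm_nonneg c, norm_nonneg (∑ i, tp (x i) (w i))]

variable [CompleteSpace H₁]

theorem inner_tp_eq_zero_of_basis {ι κ : Type*} (e : HilbertBasis ι ℂ H₁)
    (f : HilbertBasis κ ℂ H₂) {z : H} (hz : ∀ i j, ⟪tp (e i) (f j), z⟫ = 0) (x : H₁) (y : H₂) :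
    ⟪tp x y, z⟫ = 0 := by
  have hflip (j : κ) : htp.flip.contract z (f j) = 0 :=
    e.eq_zero_of_inner_eq_zero fun i => by rw [htp.flip.inner_contract_right]; exact hz i j
  have hcontract : htp.contract z x = 0 :=
    f.eq_zero_of_inner_eq_zero fun j => by
      rw [htp.inner_contract_right, ← htp.flip.inner_contract_right, hflip, inner_zero_right]
  rw [← htp.inner_contract_right, hcontract, inner_zero_right]

def hilbertBasis {ι κ : Type*} (e : HilbertBasis ι ℂ H₁) (f : HilbertBasis κ ℂ H₂) :
    HilbertBasis (ι × κ) ℂ H :=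
  HilbertBasis.mkOfOrthogonalEqBot (htp.orthonormal_tp e.orthonormal f.orthonormal) <|
    (Submodule.eq_bot_iff _).2 fun _ hz =>
      eq_zero_of_inner_eq_zero_of_dense_span htp.dense_span <| by
        rintro _ ⟨x, y, rfl⟩
        refine htp.inner_tp_eq_zero_of_basis e f (fun i j => ?_) x y
        exact Submodule.inner_right_of_mem_orthogonal
          (Submodule.subset_span (Set.mem_range_self (i, j))) hz

@[simp] theorem coe_hilbertBasis {ι κ : Type*} (e : HilbertBasis ι ℂ H₁)
    (f : HilbertBasis κ ℂ H₂) : ⇑(htp.hilbertBasis e f) = fun p => tp (e p.1) (f p.2) :=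
  HilbertBasis.coe_mkOfOrthogonalEqBot _ _

def partialTraceRankOne (a b : H) : H₁ →L[ℂ] H₁ :=
  (htp.flip.contract a).comp (htp.contract b)

theorem inner_partialTraceRankOne (a b : H) (x y : H₁) :
    ⟪y, htp.partialTraceRankOne a b x⟫ = ⟪htp.contract b x, htp.contract a y⟫ := by
  rw [partialTraceRankOne, ContinuousLinearMap.comp_apply, htp.flip.inner_contract_right,
    ← inner_conj_symm, ← htp.inner_contract_left, inner_conj_symm]

theorem isPartialTrace₂_partialTraceRankOne (a b : H) :
    IsPartialTrace₂ tp (rankOne a b) (htp.partialTraceRankOne a b) := by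
  intro x y
  rw [inner_partialTraceRankOne, ← (hBasis H₂).tsum_inner_mul_inner]
  refine tsum_congr fun j => ?_
  rw [rankOne_apply, inner_smul_right, htp.inner_contract_left, htp.inner_contract_right]

theorem traceNorm_partialTraceRankOne_le (a b : H) :
    traceNorm (htp.partialTraceRankOne a b) ≤ ENNReal.ofReal (‖a‖ * ‖b‖) := by
  rw [mul_comm]
  refine traceNorm_le_of_norm_inner_le (f := fun x => ‖htp.contract b x‖)
    (g := fun y => ‖htp.contract a y‖) (norm_nonneg b) (norm_nonneg a) (fun x y => ?_)
    (fun _ _ hx => htp.sum_norm_contract_sq_le b hx)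
    (fun _ _ hy => htp.sum_norm_contract_sq_le a hy)
  rw [norm_inner_symm, inner_partialTraceRankOne]
  exact norm_inner_le_norm _ _

theorem opTrace_partialTraceRankOne (a b : H) :
    opTrace (htp.partialTraceRankOne a b) = ⟪b, a⟫ := by
  have hsum := (htp.hilbertBasis (hBasis H₁) (hBasis H₂)).hasSum_inner_rankOne a b
  rw [coe_hilbertBasis] at hsum
  exact ((htp.isPartialTrace₂_partialTraceRankOne a b).opTrace_eq hsum.summable).trans hsum.tsum_eq

end IsHilbertTensor

variable {H₁ H₂ H : Type*}
  [NormedAddCommGroup H₁] [InnerProductSpace ℂ H₁] [CompleteSpace H₁]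
  [TopologicalSpace.SeparableSpace H₁]
  [NormedAddCommGroup H₂] [InnerProductSpace ℂ H₂] [CompleteSpace H₂]
  [TopologicalSpace.SeparableSpace H₂]
  [NormedAddCommGroup H] [InnerProductSpace ℂ H] [CompleteSpace H]
  [TopologicalSpace.SeparableSpace H]

/-- for `a, b ∈ H₁ ⊗ H₂`, the rank one operator `a b*` satisfies
`max(‖tr₂(ab*)‖₁, ‖tr₁(ab*)‖₁) ≤ ‖a‖ ‖b‖ = ‖ab*‖₁` and
`tr(ab*) = tr(tr₂(ab*)) = tr(tr₁(ab*)) = ⟨a, b⟩`. -/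
theorem partialTrace_rankOne
    (tp : H₁ → H₂ → H) (htp : IsHilbertTensor tp) (a b : H) :
    ∃ (C : H₁ →L[ℂ] H₁) (D : H₂ →L[ℂ] H₂),
      IsPartialTrace₂ tp (rankOne a b) C ∧ IsPartialTrace₁ tp (rankOne a b) D ∧
      traceNorm (rankOne a b) = ENNReal.ofReal (‖a‖ * ‖b‖) ∧
      traceNorm C ≤ ENNReal.ofReal (‖a‖ * ‖b‖) ∧
      traceNorm D ≤ ENNReal.ofReal (‖a‖ * ‖b‖) ∧
      opTrace (rankOne a b) = ⟪b, a⟫ ∧ opTrace C = ⟪b, a⟫ ∧ opTrace D = ⟪b, a⟫ :=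
  ⟨htp.partialTraceRankOne a b, htp.flip.partialTraceRankOne a b,
    htp.isPartialTrace₂_partialTraceRankOne a b, htp.flip.isPartialTrace₂_partialTraceRankOne a b,
    traceNorm_rankOne a b,
    htp.traceNorm_partialTraceRankOne_le a b, htp.flip.traceNorm_partialTraceRankOne_le a b,
    opTrace_rankOne a b,
    htp.opTrace_partialTraceRankOne a b, htp.flip.opTrace_partialTraceRankOne a b⟩
end
end
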